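/- arXiv:2312.05938 — 2 statements merged into one kernel-verified Lean document; each statement's English description precedes it below -/
import Mathlib

section
/- Let s ≥ 1 be an integer and let k, n be positive integers. If (k*)^s does not divide n, where k* = k/k̄ and k̄ is the largest squarefree divisor of k, then c_k^{(s)}(n) = 0. -/
open scoped BigOperators
open ArithmeticFunction

/-- Generalized gcd `(a,b)_s`: the largest `d ^ s` (with `d` a positive integer)
dividing both `a` and `b`. -/
def ggcd (s a b : ℕ) : ℕ :=
  (Nat.findGreatest (fun d => d ^ s ∣ a ∧ d ^ s ∣ b) (max a b)) ^ s

/-- The Cohen–Ramanujan sum `c_k^{(s)}(n) = Σ_{h=1, (h,k^s)_s=1}^{k^s} e^{2πinh/k^s}`. -/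
noncomputable def CRS (s k n : ℕ) : ℂ :=
  ∑ h ∈ Finset.Icc 1 (k ^ s),
    if ggcd s h (k ^ s) = 1 then
      Complex.exp (2 * Real.pi * Complex.I * n * h / (k ^ s))
    else 0

/-- The core of `k`: its largest squarefree divisor. -/
def core (k : ℕ) : ℕ := ∏ p ∈ k.primeFactors, p

/-- `k* = k / k̄`. -/
def spart (k : ℕ) : ℕ := k / core k

/-- `ξ_d(k) = d` if `d ∣ k`, and `0` otherwise. -/
def xi (d k : ℕ) : ℕ := if d ∣ k then d else 0

/-- Klee's function `Φ_s(n) = n ∏_{p prime, p^s ∣ n} (1 - 1/p^s)`. -/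
noncomputable def Klee (s n : ℕ) : ℂ :=
  n * ∏ p ∈ n.primeFactors.filter (fun p => p ^ s ∣ n), (1 - 1 / (p : ℂ) ^ s)

/-- The Jordan totient function `J_s(n) = n^s ∏_{p ∣ n} (1 - 1/p^s)` (as a complex number). -/
noncomputable def Jordan (s n : ℕ) : ℂ :=
  (n : ℂ) ^ s * ∏ p ∈ n.primeFactors, (1 - 1 / (p : ℂ) ^ s)

/-!
Write `k ^ s = c * m` with `c = core k ^ s` and `m = spart k ^ s`. Since `p ^ s ∣ c` for every
prime `p ∣ k`, the condition `(h, k ^ s)_s = 1` depends only on `h` modulo `c`. So shifting the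
summation variable by `c` multiplies the (`k ^ s`-periodic) summand by `ζ = e^{2πinc/k^s}`,
and `ζ ≠ 1` exactly when `m ∤ n`; the sum `S` then satisfies `ζ S = S`, so `S = 0`.
-/

open Finset Complex Real

theorem Finset.sum_range_eq_zero_of_map_add_eq_mul {R : Type*} [CommRing R] [NoZeroDivisors R]
    {f : ℕ → R} {c N : ℕ} {ζ : R} (hζ : ζ ≠ 1) (hc : ∀ h, f (h + c) = ζ * f h)
    (hN : ∀ h, f (h + N) = f h) : ∑ h ∈ range N, f h = 0 := by
  have hsplit := sum_range_add f c N
  rw [add_comm c N, sum_range_add] at hsplit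
  simp only [add_comm N, hN, add_comm c, hc, ← mul_sum] at hsplit
  have : (ζ - 1) * ∑ h ∈ range N, f h = 0 := by linear_combination -hsplit
  exact (mul_eq_zero.mp this).resolve_left (sub_ne_zero.mpr hζ)

theorem ggcd_eq_one_iff {s : ℕ} (hs : s ≠ 0) {a b : ℕ} :
    ggcd s a b = 1 ↔ ∀ p, p.Prime → p ^ s ∣ a → ¬ p ^ s ∣ b := by
  rw [ggcd, Nat.pow_eq_one, or_iff_left hs, Nat.findGreatest_eq_iff]
  constructor
  · rintro ⟨hmax, -, hgreatest⟩ p hp hpa hpb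
    have hp_dvd_max : p ^ s ∣ max a b := by
      rcases max_choice a b with h | h <;> rw [h] <;> assumption
    exact hgreatest hp.one_lt ((Nat.le_self_pow hs p).trans (Nat.le_of_dvd hmax hp_dvd_max))
      ⟨hpa, hpb⟩
  · intro H
    refine ⟨?_, fun _ => by simp, fun d hd _ ⟨hda, hdb⟩ => ?_⟩
    · by_contra! h0
      exact H 2 Nat.prime_two (by simp_all) (by simp_all)
    · have hp := Nat.minFac_dvd d
      exact H d.minFac (Nat.minFac_prime hd.ne') ((pow_dvd_pow_of_dvd hp s).trans hda)
        ((pow_dvd_pow_of_dvd hp s).trans hdb)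

theorem ggcd_pow_eq_one_iff {s : ℕ} (hs : s ≠ 0) {a k : ℕ} :
    ggcd s a (k ^ s) = 1 ↔ ∀ p, p.Prime → p ∣ k → ¬ p ^ s ∣ a := by
  rw [ggcd_eq_one_iff hs]
  exact forall₂_congr fun p _ => by rw [Nat.pow_dvd_pow_iff hs, imp_not_comm]

theorem core_dvd (k : ℕ) : core k ∣ k := Nat.prod_primeFactors_dvd k

theorem core_mul_spart (k : ℕ) : core k * spart k = k := Nat.mul_div_cancel' (core_dvd k)

theorem core_ne_zero (k : ℕ) : core k ≠ 0 :=
  prod_ne_zero_iff.mpr fun _ hp => (Nat.prime_of_mem_primeFactors hp).ne_zero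

theorem ggcd_add_pow_eq_one_iff {s k d : ℕ} (hs : s ≠ 0) (hk : k ≠ 0) (hd : core k ^ s ∣ d)
    (a : ℕ) : ggcd s (a + d) (k ^ s) = 1 ↔ ggcd s a (k ^ s) = 1 := by
  simp only [ggcd_pow_eq_one_iff hs]
  refine forall₂_congr fun p hp => imp_congr_right fun hpk => not_congr (Nat.dvd_add_left ?_)
  have hp_dvd_core : p ∣ core k := dvd_prod_of_mem _ (Nat.mem_primeFactors.mpr ⟨hp, hpk, hk⟩)
  exact (pow_dvd_pow_of_dvd hp_dvd_core s).trans hd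

theorem CRS_eq_sum_range (s k n : ℕ) :
    CRS s k n = ∑ h ∈ range (k ^ s),
      if ggcd s (1 + h) (k ^ s) = 1 then exp (2 * π * I / (k ^ s : ℕ)) ^ (n * (1 + h))
      else 0 := by
  rw [CRS, ← Ico_add_one_right_eq_Icc, sum_Ico_eq_sum_range, Nat.add_sub_cancel]
  refine sum_congr rfl fun h _ => ?_
  rw [← Complex.exp_nat_mul]
  push_cast
  ring_nf

theorem CRS_eq_zero_of_not_dvd_general (s : ℕ) (hs : 1 ≤ s) (k n : ℕ) (hk : 0 < k)
    (h : ¬ (spart k) ^ s ∣ n) :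
    CRS s k n = 0 := by
  have hs0 : s ≠ 0 := by omega
  have hK : k ^ s = core k ^ s * spart k ^ s := by rw [← mul_pow, core_mul_spart]
  rw [CRS_eq_sum_range]
  set μ := exp (2 * π * I / (k ^ s : ℕ))
  have hμ : IsPrimitiveRoot μ (k ^ s) := isPrimitiveRoot_exp (k ^ s) (pow_ne_zero s hk.ne')
  refine sum_range_eq_zero_of_map_add_eq_mul (c := core k ^ s) (ζ := μ ^ (n * core k ^ s)) ?_
    (fun a => ?_) (fun a => ?_)
  · rwa [Ne, hμ.pow_eq_one_iff_dvd, hK, mul_comm n,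
      Nat.mul_dvd_mul_iff_left (pow_pos (Nat.pos_of_ne_zero (core_ne_zero k)) s)]
  · simp only [← add_assoc, ggcd_add_pow_eq_one_iff hs0 hk.ne' dvd_rfl]
    split_ifs <;> ring
  · have hμK : μ ^ (n * (1 + a + k ^ s)) = μ ^ (n * (1 + a)) := by
      rw [mul_add, pow_add, mul_comm n (k ^ s), pow_mul μ (k ^ s), hμ.pow_eq_one, one_pow,
        mul_one]
    simp only [← add_assoc, hμK,
      ggcd_add_pow_eq_one_iff hs0 hk.ne' (pow_dvd_pow_of_dvd (core_dvd k) s)]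

/-- If `(k*)^s ∤ n` then `c_k^{(s)}(n) = 0`. -/
theorem CRS_eq_zero_of_not_dvd (s : ℕ) (hs : 1 ≤ s) (k n : ℕ) (hk : 0 < k) (hn : 0 < n)
    (h : ¬ (spart k) ^ s ∣ n) :
    CRS s k n = 0 :=
  CRS_eq_zero_of_not_dvd_general s hs k n hk h
end

section
/- Let s ≥ 1 be an integer and let k and n be squarefree positive integers. Then μ(k)·c_k^{(s)}(n^s) = μ(n)·c_n^{(s)}(k^s), where μ is the Möbius function. -/
open scoped BigOperators
open ArithmeticFunction
open scoped ArithmeticFunction.Moebius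

/-!
Möbius inversion of the condition `(h, k^s)_s = 1` over the `d ∣ k` with `d^s ∣ h`, followed by
orthogonality of roots of unity, gives Cohen's formula
`c_k^{(s)}(m) = ∑_{d ∣ k, d^s ∣ m} μ(k/d) d^s`.
For squarefree `k` one has `μ(k) μ(k/d) = μ(d)`, hence
`μ(k) c_k^{(s)}(n^s) = ∑_{d ∣ gcd(k, n)} μ(d) d^s`, which is symmetric in `k` and `n`.
-/

open Finset

lemma sum_divisors_moebius {R : Type*} [Ring R] (n : ℕ) :
    ∑ d ∈ n.divisors, (μ d : R) = if n = 1 then 1 else 0 := by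
  have h := congr($(coe_moebius_mul_coe_zeta (R := R)) n)
  rwa [coe_mul_zeta_apply, one_apply] at h

def ggcdRoot (s a b : ℕ) : ℕ :=
  Nat.findGreatest (fun d => d ^ s ∣ a ∧ d ^ s ∣ b) (max a b)

lemma ggcd_eq_ggcdRoot_pow (s a b : ℕ) : ggcd s a b = ggcdRoot s a b ^ s := rfl

/-- The `d` with `d ^ s ∣ a` and `d ^ s ∣ b` are closed under `lcm` (as `lcm d e ^ s =
lcm (d ^ s) (e ^ s)`), so they are exactly the divisors of the largest one. -/
lemma dvd_ggcdRoot_iff {s a b d : ℕ} (hs : s ≠ 0) (ha : a ≠ 0) :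
    d ∣ ggcdRoot s a b ↔ d ^ s ∣ a ∧ d ^ s ∣ b := by
  set P : ℕ → Prop := fun d => d ^ s ∣ a ∧ d ^ s ∣ b
  have hbound : ∀ {e}, P e → e ≤ max a b := fun he =>
    (Nat.le_self_pow hs _).trans ((Nat.le_of_dvd (Nat.pos_of_ne_zero ha) he.1).trans
      (le_max_left a b))
  have hne : ∀ {e}, P e → e ≠ 0 := by
    rintro e he rfl
    have h0 : 0 ^ s ∣ a := he.1
    rw [zero_pow hs, zero_dvd_iff] at h0
    exact ha h0
  have hP1 : P 1 := by simp [P]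
  have hspec : P (ggcdRoot s a b) := Nat.findGreatest_spec (hbound hP1) hP1
  constructor
  · intro hd
    exact ⟨(pow_dvd_pow_of_dvd hd s).trans hspec.1, (pow_dvd_pow_of_dvd hd s).trans hspec.2⟩
  · intro hd
    set D := ggcdRoot s a b
    have hlcm : P (Nat.lcm d D) := by
      simp only [P, ← Nat.pow_lcm_pow]
      exact ⟨Nat.lcm_dvd hd.1 hspec.1, Nat.lcm_dvd hd.2 hspec.2⟩
    have hle : Nat.lcm d D ≤ D := Nat.le_findGreatest (hbound hlcm) hlcm
    have heq : Nat.lcm d D = D :=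
      le_antisymm hle (Nat.le_of_dvd (Nat.pos_of_ne_zero (hne hlcm)) (Nat.dvd_lcm_right d D))
    exact heq ▸ Nat.dvd_lcm_left d D

lemma ite_ggcd_pow_eq_one {R : Type*} [Ring R] {s h k : ℕ} (hs : s ≠ 0) (hh : h ≠ 0)
    (hk : k ≠ 0) :
    (if ggcd s h (k ^ s) = 1 then (1 : R) else 0) = ∑ d ∈ k.divisors with d ^ s ∣ h, (μ d : R) := by
  have hD : ggcdRoot s h (k ^ s) ≠ 0 := by
    intro h0
    have hself := ((dvd_ggcdRoot_iff (b := k ^ s) hs hh).mp dvd_rfl).1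
    rw [h0, zero_pow hs, zero_dvd_iff] at hself
    exact hh hself
  have hdiv : {d ∈ k.divisors | d ^ s ∣ h} = (ggcdRoot s h (k ^ s)).divisors := by
    ext d
    simp [Nat.mem_divisors, dvd_ggcdRoot_iff hs hh, Nat.pow_dvd_pow_iff hs, hk, hD, and_comm]
  simp only [hdiv, sum_divisors_moebius, ggcd_eq_ggcdRoot_pow, pow_eq_one_iff_left hs]

lemma sum_Icc_pow_of_pow_eq_one {R : Type*} [CommRing R] [IsDomain R] [DecidableEq R] {ζ : R}
    {M : ℕ} (hζ : ζ ^ M = 1) : ∑ i ∈ Icc 1 M, ζ ^ i = if ζ = 1 then (M : R) else 0 := by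
  split_ifs with h1
  · simp [h1]
  have hshift : ∑ i ∈ Icc 1 M, ζ ^ i = ζ * ∑ i ∈ range M, ζ ^ i := by
    rw [← Ico_add_one_right_eq_Icc, sum_Ico_eq_sum_range, mul_sum]
    simp [pow_add]
  have hgeom : (∑ i ∈ range M, ζ ^ i) * (ζ - 1) = 0 := by rw [geom_sum_mul, hζ, sub_self]
  rw [hshift, (mul_eq_zero.mp hgeom).resolve_right (sub_ne_zero.mpr h1), mul_zero]

open Complex Real in
lemma sum_Icc_exp_eq_ite (M a : ℕ) :
    ∑ h ∈ Icc 1 M, exp (2 * π * I * a * h / M) = if M ∣ a then (M : ℂ) else 0 := by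
  rcases Nat.eq_zero_or_pos M with rfl | hM
  · simp
  set ζ := exp (2 * π * I / M)
  have hζ : IsPrimitiveRoot ζ M := isPrimitiveRoot_exp M hM.ne'
  have hterm : ∀ h : ℕ, exp (2 * π * I * a * h / M) = (ζ ^ a) ^ h := by
    intro h
    rw [← pow_mul, ← Complex.exp_nat_mul]
    push_cast
    ring_nf
  have hζa : (ζ ^ a) ^ M = 1 := by rw [← pow_mul, mul_comm, pow_mul, hζ.pow_eq_one, one_pow]
  simp_rw [hterm, sum_Icc_pow_of_pow_eq_one hζa, hζ.pow_eq_one_iff_dvd]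

lemma sum_Icc_filter_dvd {M : Type*} [AddCommMonoid M] {c : ℕ} (hc : c ≠ 0) (N : ℕ)
    (f : ℕ → M) : ∑ h ∈ Icc 1 (c * N) with c ∣ h, f h = ∑ j ∈ Icc 1 N, f (c * j) := by
  have hc' : 0 < c := Nat.pos_of_ne_zero hc
  symm
  refine sum_nbij' (c * ·) (· / c) ?_ ?_ ?_ ?_ (fun _ _ => rfl)
  · intro j hj
    simp only [mem_Icc, mem_filter] at hj ⊢
    exact ⟨⟨Nat.mul_pos hc' hj.1, Nat.mul_le_mul_left c hj.2⟩, dvd_mul_right c j⟩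
  · intro h hh
    simp only [mem_Icc, mem_filter] at hh ⊢
    obtain ⟨⟨h1, h2⟩, q, rfl⟩ := hh
    rw [Nat.mul_div_cancel_left q hc']
    exact ⟨Nat.pos_of_mul_pos_left h1, Nat.le_of_mul_le_mul_left h2 hc'⟩
  · intro j _
    exact Nat.mul_div_cancel_left j hc'
  · intro h hh
    exact Nat.mul_div_cancel' (mem_filter.mp hh).2

open Complex Real in
lemma sum_Icc_filter_dvd_exp {c : ℕ} (hc : c ≠ 0) (N m : ℕ) :
    ∑ h ∈ Icc 1 (c * N) with c ∣ h, Complex.exp (2 * π * I * m * h / (c * N : ℕ)) =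
      if N ∣ m then (N : ℂ) else 0 := by
  rw [sum_Icc_filter_dvd hc, ← sum_Icc_exp_eq_ite]
  refine sum_congr rfl fun j _ => congrArg Complex.exp ?_
  have hc' : (c : ℂ) ≠ 0 := Nat.cast_ne_zero.mpr hc
  push_cast
  rw [mul_left_comm _ (c : ℂ), mul_div_mul_left _ _ hc']

theorem CRS_eq_sum_divisors {s k : ℕ} (hs : s ≠ 0) (hk : k ≠ 0) (m : ℕ) :
    CRS s k m = ∑ d ∈ k.divisors, (μ (k / d) : ℂ) * if d ^ s ∣ m then (d : ℂ) ^ s else 0 := by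
  set E : ℕ → ℂ := fun h => Complex.exp (2 * Real.pi * Complex.I * m * h / (k : ℂ) ^ s)
  have hmoebius : ∀ h ∈ Icc 1 (k ^ s), (if ggcd s h (k ^ s) = 1 then E h else 0) =
      ∑ d ∈ k.divisors, if d ^ s ∣ h then (μ d : ℂ) * E h else 0 := by
    intro h hh
    have hh0 : h ≠ 0 := Nat.one_le_iff_ne_zero.mp (mem_Icc.mp hh).1
    rw [← boole_mul, ite_ggcd_pow_eq_one hs hh0 hk, sum_filter, sum_mul]
    simp only [ite_mul, zero_mul]
  have hdivisor : ∀ d ∈ k.divisors, ∑ h ∈ Icc 1 (k ^ s) with d ^ s ∣ h, E h =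
      if (k / d) ^ s ∣ m then (((k / d) ^ s : ℕ) : ℂ) else 0 := by
    intro d hd
    have hk' : k ^ s = d ^ s * (k / d) ^ s := by
      rw [← mul_pow, Nat.mul_div_cancel' (Nat.dvd_of_mem_divisors hd)]
    have hkC : (k : ℂ) ^ s = ((d ^ s * (k / d) ^ s : ℕ) : ℂ) := by exact_mod_cast hk'
    simp only [E, hkC, hk']
    exact sum_Icc_filter_dvd_exp (pow_ne_zero s (Nat.ne_of_gt (Nat.pos_of_mem_divisors hd))) _ m
  calc CRS s k m
        = ∑ h ∈ Icc 1 (k ^ s), ∑ d ∈ k.divisors, if d ^ s ∣ h then (μ d : ℂ) * E h else 0 :=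
        sum_congr rfl hmoebius
    _ = ∑ d ∈ k.divisors, (μ d : ℂ) * ∑ h ∈ Icc 1 (k ^ s) with d ^ s ∣ h, E h := by
        rw [sum_comm]
        simp only [mul_sum, sum_filter, mul_ite, mul_zero]
    _ = ∑ d ∈ k.divisors, (μ d : ℂ) * if (k / d) ^ s ∣ m then (((k / d) ^ s : ℕ) : ℂ) else 0 :=
        sum_congr rfl fun d hd => by rw [hdivisor d hd]
    _ = _ := by
        rw [← Nat.sum_div_divisors k]
        refine sum_congr rfl fun d hd => ?_
        rw [Nat.div_div_self (Nat.dvd_of_mem_divisors hd) hk]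
        push_cast
        rfl

lemma moebius_mul_moebius_div {k d : ℕ} (hk : Squarefree k) (hd : d ∣ k) :
    μ k * μ (k / d) = μ d := by
  have hmul : d * (k / d) = k := Nat.mul_div_cancel' hd
  have hcop : Nat.Coprime d (k / d) := Nat.coprime_of_squarefree_mul (hmul.symm ▸ hk)
  have hsq : μ (k / d) ^ 2 = 1 :=
    moebius_sq_eq_one_of_squarefree (hk.squarefree_of_dvd (Nat.div_dvd_of_dvd hd))
  have hsplit : μ k = μ d * μ (k / d) := by
    rw [← isMultiplicative_moebius.map_mul_of_coprime hcop, hmul]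
  rw [hsplit, mul_assoc, ← sq, hsq, mul_one]

lemma moebius_mul_CRS_pow {s k : ℕ} (hs : s ≠ 0) (hk : Squarefree k) (n : ℕ) :
    (μ k : ℂ) * CRS s k (n ^ s) = ∑ d ∈ (k.gcd n).divisors, (μ d : ℂ) * (d : ℂ) ^ s := by
  rw [CRS_eq_sum_divisors hs hk.ne_zero, mul_sum,
    ← Nat.divisors_filter_dvd_of_dvd hk.ne_zero (Nat.gcd_dvd_left k n), sum_filter]
  refine sum_congr rfl fun d hd => ?_
  have hdk := Nat.dvd_of_mem_divisors hd
  simp only [Nat.pow_dvd_pow_iff hs, Nat.dvd_gcd_iff, hdk, true_and, mul_ite, mul_zero]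
  split_ifs
  · rw [← mul_assoc, ← Int.cast_mul, moebius_mul_moebius_div hk hdk]
  · rfl

theorem moebius_CRS_symm_general (s : ℕ) (hs : 1 ≤ s) (k n : ℕ)
    (hksf : Squarefree k) (hnsf : Squarefree n) :
    (μ k : ℂ) * CRS s k (n ^ s) = (μ n : ℂ) * CRS s n (k ^ s) := by
  rw [moebius_mul_CRS_pow (by omega) hksf, moebius_mul_CRS_pow (by omega) hnsf, Nat.gcd_comm]

/-- For squarefree `k` and `n`, `μ(k)·c_k^{(s)}(n^s) = μ(n)·c_n^{(s)}(k^s)`. -/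
theorem moebius_CRS_symm (s : ℕ) (hs : 1 ≤ s) (k n : ℕ) (hk : 0 < k) (hn : 0 < n)
    (hksf : Squarefree k) (hnsf : Squarefree n) :
    (μ k : ℂ) * CRS s k (n ^ s) = (μ n : ℂ) * CRS s n (k ^ s) :=
  moebius_CRS_symm_general s hs k n hksf hnsf
end
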